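/- Let μ be the standard Gaussian measure on ℝⁿ, and let A, B be Borel sets such that the Euclidean distance between A and B is at least ε > 0 (i.e., |x − y| ≥ ε for all x ∈ A, y ∈ B). Then μ(A) · μ(B) ≤ exp(−ε²/4). -/

import Mathlib

/-!
The Gaussian measure `γ` has Maurey's property `(τ)` with cost `|x - y|² / 4`: whenever
`F x * G y ≤ exp (|x - y|² / 4)` for all `x, y`, one has `∫ F dγ * ∫ G dγ ≤ 1`. Taking `F = 1_A`
and `G = exp (ε² / 4) * 1_B` gives the bound.

Property `(τ)` tensorizes, so it suffices to prove it on the line. There the Gaussian density `φ`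
satisfies `φ s * φ t * exp ((s - t)² / 4) = φ ((s + t) / 2)²`, so property `(τ)` is an instance of
the Prékopa–Leindler inequality `∫ f * ∫ g ≤ (∫ h)²` for `f s * g t ≤ h ((s + t) / 2)²`. After
rescaling `f` and `g` to equal essential suprema, the layer-cake formula reduces that inequality to
the Brunn–Minkowski inequality `|K| + |L| ≤ |K + L|` for the superlevel sets.
-/

open MeasureTheory ProbabilityTheory
open scoped ENNReal

/-- The standard Gaussian measure on `ℝⁿ`. -/
noncomputable def stdGaussian (n : ℕ) : Measure (EuclideanSpace ℝ (Fin n)) :=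
  (Measure.pi (fun _ : Fin n => gaussianReal 0 1)).map (MeasurableEquiv.toLp 2 (Fin n → ℝ))

open Set Real
open scoped NNReal Pointwise

theorem ENNReal.four_mul_le_sq_add (a b : ℝ≥0∞) : 4 * a * b ≤ (a + b) ^ 2 := by
  rcases eq_or_ne a ∞ with rfl | ha
  · simp
  rcases eq_or_ne b ∞ with rfl | hb
  · simp
  lift a to ℝ≥0 using ha
  lift b to ℝ≥0 using hb
  exact_mod_cast _root_.four_mul_le_sq_add a b

theorem ENNReal.ofReal_exp_neg (r : ℝ) :
    ENNReal.ofReal (exp (-r)) = (ENNReal.ofReal (exp r))⁻¹ := by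
  rw [exp_neg, ENNReal.ofReal_inv_of_pos (exp_pos r)]

theorem volume_add_volume_le_volume_add_of_isCompact {K L : Set ℝ} (hK : IsCompact K)
    (hL : IsCompact L) (hK₀ : K.Nonempty) (hL₀ : L.Nonempty) :
    volume K + volume L ≤ volume (K + L) := by
  set a := sSup K
  set b := sInf L
  have haK : a ∈ K := hK.sSup_mem hK₀
  have hbL : b ∈ L := hL.sInf_mem hL₀
  -- the translates `b +ᵥ K` and `a +ᵥ L` lie in `K + L` and meet only at `a + b`
  have hunion : (b +ᵥ K) ∪ (a +ᵥ L) ⊆ K + L := by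
    rintro _ (⟨k, hk, rfl⟩ | ⟨l, hl, rfl⟩)
    · simpa only [vadd_eq_add, add_comm] using add_mem_add hk hbL
    · exact add_mem_add haK hl
  have hinter : (b +ᵥ K) ∩ (a +ᵥ L) ⊆ {a + b} := by
    rintro _ ⟨⟨k, hk, rfl⟩, ⟨l, hl, hkl⟩⟩
    have hka : k ≤ a := le_csSup hK.bddAbove hk
    have hbl : b ≤ l := csInf_le hL.bddBelow hl
    simp only [vadd_eq_add] at hkl ⊢
    rw [mem_singleton_iff]
    linarith
  calc volume K + volume L = volume (b +ᵥ K) + volume (a +ᵥ L) := by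
        rw [measure_vadd, measure_vadd]
    _ = volume ((b +ᵥ K) ∪ (a +ᵥ L)) + volume ((b +ᵥ K) ∩ (a +ᵥ L)) :=
        (measure_union_add_inter _ (hL.vadd a).isClosed.measurableSet).symm
    _ ≤ volume (K + L) + volume ({a + b} : Set ℝ) := by gcongr
    _ = volume (K + L) := by rw [Real.volume_singleton, add_zero]

theorem volume_add_volume_le_volume_add {A B : Set ℝ} (hA : MeasurableSet A)
    (hB : MeasurableSet B) (hA₀ : A.Nonempty) (hB₀ : B.Nonempty) :
    volume A + volume B ≤ volume (A + B) := by
  obtain ⟨a, ha⟩ := hA₀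
  obtain ⟨b, hb⟩ := hB₀
  rcases eq_or_ne (volume A) 0 with hA0 | hA0
  · rw [hA0, zero_add, ← measure_vadd volume a B]
    exact measure_mono (vadd_set_subset_add ha)
  rcases eq_or_ne (volume B) 0 with hB0 | hB0
  · rw [hB0, add_zero, ← measure_vadd volume b A, add_comm]
    exact measure_mono (vadd_set_subset_add hb)
  by_contra! hlt
  obtain ⟨α, hα, β, hβ, hαβ⟩ := ENNReal.exists_lt_add_of_lt_add hlt hA0 hB0
  obtain ⟨K, hKA, hK, hαK⟩ := hA.exists_lt_isCompact hα
  obtain ⟨L, hLB, hL, hβL⟩ := hB.exists_lt_isCompact hβ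
  have hK₀ : K.Nonempty := nonempty_of_measure_ne_zero (ne_bot_of_gt hαK)
  have hL₀ : L.Nonempty := nonempty_of_measure_ne_zero (ne_bot_of_gt hβL)
  have hKL := volume_add_volume_le_volume_add_of_isCompact hK hL hK₀ hL₀
  exact (hαβ.trans_le ((add_le_add hαK.le hβL.le).trans
    (hKL.trans (measure_mono (add_subset_add hKA hLB))))).false

theorem lintegral_eq_lintegral_meas_ofReal_lt {α : Type*} [MeasurableSpace α] (μ : Measure α)
    [SFinite μ] {f : α → ℝ≥0∞} (hf : Measurable f) :
    ∫⁻ x, f x ∂μ = ∫⁻ t in Ioi 0, μ {x | ENNReal.ofReal t < f x} := by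
  have hvol (a : ℝ≥0∞) : volume.restrict (Ioi 0) {t : ℝ | ENNReal.ofReal t < a} = a := by
    rcases eq_or_ne a ∞ with rfl | ha
    · simp
    have hIoo : {t : ℝ | ENNReal.ofReal t < a} ∩ Ioi 0 = Ioo 0 a.toReal := by
      ext t
      simp only [mem_inter_iff, mem_ofPred_eq, mem_Ioi, mem_Ioo]
      constructor
      · rintro ⟨h, ht⟩; exact ⟨ht, (ENNReal.ofReal_lt_iff_lt_toReal ht.le ha).1 h⟩
      · rintro ⟨ht, h⟩; exact ⟨(ENNReal.ofReal_lt_iff_lt_toReal ht.le ha).2 h, ht⟩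
    rw [Measure.restrict_apply' measurableSet_Ioi, hIoo, Real.volume_Ioo, sub_zero,
      ENNReal.ofReal_toReal ha]
  have hS : MeasurableSet {p : ℝ × α | ENNReal.ofReal p.1 < f p.2} :=
    measurableSet_lt (ENNReal.measurable_ofReal.comp measurable_fst) (hf.comp measurable_snd)
  calc ∫⁻ x, f x ∂μ = ∫⁻ x, volume.restrict (Ioi 0) {t : ℝ | ENNReal.ofReal t < f x} ∂μ := by
        simp only [hvol]
    _ = (volume.restrict (Ioi 0)).prod μ {p : ℝ × α | ENNReal.ofReal p.1 < f p.2} :=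
        (Measure.prod_apply_symm hS).symm
    _ = ∫⁻ t in Ioi 0, μ {x | ENNReal.ofReal t < f x} := Measure.prod_apply hS

theorem lintegral_comp_div_two {h : ℝ → ℝ≥0∞} (hh : Measurable h) :
    ∫⁻ u, h (u / 2) = 2 * ∫⁻ u, h u := by
  have hmap := Real.map_volume_mul_left (a := 2⁻¹) (by norm_num)
  simp only [inv_inv, abs_two, ENNReal.ofReal_ofNat] at hmap
  rw [← smul_eq_mul, ← lintegral_smul_measure, ← hmap, lintegral_map hh (measurable_const_mul _)]
  simp only [div_eq_inv_mul]

section PrekopaLeindler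

variable {f g h : ℝ → ℝ≥0∞}

theorem measure_lt_add_measure_lt_le_of_min_le (hf : Measurable f) (hg : Measurable g)
    (hfg : essSup f volume = essSup g volume) (hfgh : ∀ s t, min (f s) (g t) ≤ h (s + t))
    (a : ℝ≥0∞) :
    volume {s | a < f s} + volume {t | a < g t} ≤ volume {u | a < h u} := by
  rcases lt_or_ge a (essSup f volume) with ha | ha
  · have hne {φ : ℝ → ℝ≥0∞} (hφ : a < essSup φ volume) : {s | a < φ s}.Nonempty := by
      refine nonempty_of_measure_ne_zero (μ := volume) fun h0 => hφ.not_ge (essSup_le_of_ae_le a ?_)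
      exact measure_eq_zero_iff_ae_notMem.1 h0 |>.mono fun s hs => not_lt.1 hs
    refine (volume_add_volume_le_volume_add (measurableSet_lt measurable_const hf)
      (measurableSet_lt measurable_const hg) (hne ha) (hne (hfg ▸ ha))).trans (measure_mono ?_)
    rintro _ ⟨s, hs, t, ht, rfl⟩
    exact (lt_min hs ht).trans_le (hfgh s t)
  · have hnull {φ : ℝ → ℝ≥0∞} (hφ : essSup φ volume ≤ a) : volume {s | a < φ s} = 0 :=
      measure_mono_null (fun s hs => hφ.trans_lt hs) (meas_essSup_lt (f := φ))
    rw [hnull ha, hnull (hfg ▸ ha), zero_add]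
    exact zero_le

theorem lintegral_add_lintegral_le_of_min_le (hf : Measurable f) (hg : Measurable g)
    (hh : Measurable h) (hfg : essSup f volume = essSup g volume)
    (hfgh : ∀ s t, min (f s) (g t) ≤ h (s + t)) :
    (∫⁻ s, f s) + ∫⁻ t, g t ≤ ∫⁻ u, h u := by
  rw [lintegral_eq_lintegral_meas_ofReal_lt volume hf,
    lintegral_eq_lintegral_meas_ofReal_lt volume hg,
    lintegral_eq_lintegral_meas_ofReal_lt volume hh]
  exact (le_lintegral_add _ _).trans
    (lintegral_mono fun t => measure_lt_add_measure_lt_le_of_min_le hf hg hfg hfgh _)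

theorem lintegral_mul_lintegral_le_sq_of_essSup_ne_top (hf : Measurable f) (hg : Measurable g)
    (hh : Measurable h) (hf_top : essSup f volume ≠ ∞) (hg_top : essSup g volume ≠ ∞)
    (hfgh : ∀ s t, f s * g t ≤ h ((s + t) / 2) ^ 2) :
    (∫⁻ s, f s) * ∫⁻ t, g t ≤ (∫⁻ u, h u) ^ 2 := by
  rcases eq_or_ne (∫⁻ s, f s) 0 with hf0 | hf0
  · simp [hf0]
  rcases eq_or_ne (∫⁻ t, g t) 0 with hg0 | hg0
  · simp [hg0]
  have hf_ne : essSup f volume ≠ 0 := fun h0 =>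
    hf0 ((lintegral_congr_ae (ENNReal.essSup_eq_zero_iff.1 h0)).trans lintegral_zero)
  have hg_ne : essSup g volume ≠ 0 := fun h0 =>
    hg0 ((lintegral_congr_ae (ENNReal.essSup_eq_zero_iff.1 h0)).trans lintegral_zero)
  -- scaling `f` by `r` and `g` by `r⁻¹` equalizes the essential suprema and keeps `f s * g t`
  set r : ℝ≥0 := NNReal.sqrt ((essSup g volume).toNNReal / (essSup f volume).toNNReal)
  have hr : r ≠ 0 := by
    simp [r, ENNReal.toNNReal_eq_zero_iff, hf_ne, hg_ne, hf_top, hg_top]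
  have hr_ess : essSup (fun s => (r : ℝ≥0∞) * f s) volume
      = essSup (fun t => ((r⁻¹ : ℝ≥0) : ℝ≥0∞) * g t) volume := by
    rw [ENNReal.essSup_const_mul, ENNReal.essSup_const_mul, ← ENNReal.coe_toNNReal hf_top,
      ← ENNReal.coe_toNNReal hg_top]
    norm_cast
    rw [eq_inv_mul_iff_mul_eq₀ hr, ← mul_assoc, NNReal.mul_self_sqrt,
      div_mul_cancel₀ _ (by simp [ENNReal.toNNReal_eq_zero_iff, hf_ne, hf_top])]
  have hrr : (r : ℝ≥0∞) * ((r⁻¹ : ℝ≥0) : ℝ≥0∞) = 1 := by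
    rw [← ENNReal.coe_mul, mul_inv_cancel₀ hr, ENNReal.coe_one]
  have hsum := lintegral_add_lintegral_le_of_min_le (hf.const_mul _) (hg.const_mul _)
    (by fun_prop : Measurable fun u => h (u / 2)) hr_ess fun s t => by
      rw [← ENNReal.pow_le_pow_left_iff two_ne_zero]
      calc min ((r : ℝ≥0∞) * f s) (((r⁻¹ : ℝ≥0) : ℝ≥0∞) * g t) ^ 2
          ≤ (r * f s) * (((r⁻¹ : ℝ≥0) : ℝ≥0∞) * g t) := by
            rw [sq]; exact mul_le_mul' (min_le_left _ _) (min_le_right _ _)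
        _ = f s * g t := by rw [mul_mul_mul_comm, hrr, one_mul]
        _ ≤ h ((s + t) / 2) ^ 2 := hfgh s t
  rw [lintegral_const_mul _ hf, lintegral_const_mul _ hg, lintegral_comp_div_two hh] at hsum
  set I := ∫⁻ s, f s
  set J := ∫⁻ t, g t
  set H := ∫⁻ u, h u
  have h4 : 4 * (I * J) ≤ 4 * H ^ 2 := calc
    4 * (I * J) = 4 * (r * I) * ((r⁻¹ : ℝ≥0) * J) := by
          rw [mul_assoc, mul_mul_mul_comm (r : ℝ≥0∞), hrr, one_mul]
    _ ≤ (r * I + (r⁻¹ : ℝ≥0) * J) ^ 2 := ENNReal.four_mul_le_sq_add _ _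
    _ ≤ (2 * H) ^ 2 := by gcongr
    _ = 4 * H ^ 2 := by rw [mul_pow]; norm_num
  exact (ENNReal.mul_le_mul_iff_right (by norm_num) (by norm_num)).1 h4

theorem lintegral_mul_lintegral_le_sq (hf : Measurable f) (hg : Measurable g)
    (hh : Measurable h) (hfgh : ∀ s t, f s * g t ≤ h ((s + t) / 2) ^ 2) :
    (∫⁻ s, f s) * ∫⁻ t, g t ≤ (∫⁻ u, h u) ^ 2 := by
  have htrunc {φ : ℝ → ℝ≥0∞} (hφ : Measurable φ) :
      ∫⁻ x, φ x = ⨆ k : ℕ, ∫⁻ x, min (φ x) k := by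
    rw [← lintegral_iSup (fun k => hφ.min measurable_const)
      fun i j hij x => min_le_min_left _ (by exact_mod_cast hij)]
    simp_rw [← inf_iSup_eq, ENNReal.iSup_natCast, inf_top_eq]
  have hbounded {φ : ℝ → ℝ≥0∞} (k : ℕ) : essSup (fun x => min (φ x) k) volume ≠ ∞ :=
    ne_top_of_le_ne_top (ENNReal.natCast_ne_top k)
      (essSup_le_of_ae_le _ (ae_of_all _ fun x => min_le_right _ _))
  rw [htrunc hf, htrunc hg, ENNReal.iSup_mul]
  refine iSup_le fun i => ?_
  rw [ENNReal.mul_iSup]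
  refine iSup_le fun j => ?_
  calc (∫⁻ s, min (f s) i) * ∫⁻ t, min (g t) j
      ≤ (∫⁻ s, min (f s) ↑(max i j)) * ∫⁻ t, min (g t) ↑(max i j) := by
        gcongr <;> exact_mod_cast (by omega)
    _ ≤ (∫⁻ u, h u) ^ 2 :=
        lintegral_mul_lintegral_le_sq_of_essSup_ne_top (hf.min measurable_const)
          (hg.min measurable_const) hh (hbounded _) (hbounded _) fun s t =>
            (mul_le_mul' (min_le_left _ _) (min_le_left _ _)).trans (hfgh s t)

end PrekopaLeindler

/-- Maurey's property `(τ)` with cost `c`, usually written `∫ e^{f □ c} dμ * ∫ e^{-f} dμ ≤ 1`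
with the infimal convolution `f □ c`; here `F` plays the role of `e^{f □ c}` and `G` of `e^{-f}`. -/
def HasPropertyTau {X : Type*} [MeasurableSpace X] (μ : Measure X) (c : X → X → ℝ) : Prop :=
  ∀ F G : X → ℝ≥0∞, Measurable F → Measurable G →
    (∀ x y, F x * G y ≤ ENNReal.ofReal (exp (c x y))) → (∫⁻ x, F x ∂μ) * ∫⁻ y, G y ∂μ ≤ 1

namespace HasPropertyTau

variable {X Y : Type*} [MeasurableSpace X] [MeasurableSpace Y] {μ : Measure X} {ν : Measure Y}
  {c c' : X → X → ℝ}

theorem mono (h : HasPropertyTau μ c') (hc : ∀ x y, c x y ≤ c' x y) : HasPropertyTau μ c :=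
  fun F G hF hG hFG => h F G hF hG fun x y =>
    (hFG x y).trans (ENNReal.ofReal_le_ofReal (exp_le_exp.2 (hc x y)))

theorem map (h : HasPropertyTau μ c) (e : X ≃ᵐ Y) :
    HasPropertyTau (μ.map e) fun x y => c (e.symm x) (e.symm y) := by
  intro F G hF hG hFG
  rw [lintegral_map_equiv, lintegral_map_equiv]
  exact h _ _ (hF.comp e.measurable) (hG.comp e.measurable) fun x y => by
    simpa using hFG (e x) (e y)

theorem prod [SFinite ν] {d : Y → Y → ℝ} (hμ : HasPropertyTau μ c) (hν : HasPropertyTau ν d) :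
    HasPropertyTau (μ.prod ν) fun p q => c p.1 q.1 + d p.2 q.2 := by
  intro F G hF hG hFG
  rw [lintegral_prod _ hF.aemeasurable, lintegral_prod _ hG.aemeasurable]
  refine hμ _ _ hF.lintegral_prod_right' hG.lintegral_prod_right' fun x x' => ?_
  have hG' : Measurable fun y' => G (x', y') := hG.comp measurable_prodMk_left
  have := hν (fun y => F (x, y)) (fun y' => G (x', y') * ENNReal.ofReal (exp (-c x x')))
    (hF.comp measurable_prodMk_left) (hG'.mul_const _) fun y y' => calc
      F (x, y) * (G (x', y') * ENNReal.ofReal (exp (-c x x')))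
        = F (x, y) * G (x', y') * ENNReal.ofReal (exp (-c x x')) := (mul_assoc ..).symm
      _ ≤ ENNReal.ofReal (exp (c x x' + d y y')) * ENNReal.ofReal (exp (-c x x')) := by
        gcongr; exact hFG (x, y) (x', y')
      _ = ENNReal.ofReal (exp (d y y')) := by
        rw [← ENNReal.ofReal_mul (exp_pos _).le, ← exp_add, add_neg_cancel_comm]
  rwa [lintegral_mul_const _ hG', ← mul_assoc, ENNReal.ofReal_exp_neg,
    ← ENNReal.le_inv_iff_mul_le, inv_inv] at this

theorem measure_mul_measure_le (h : HasPropertyTau μ c) {A B : Set X} (hA : MeasurableSet A)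
    (hB : MeasurableSet B) {r : ℝ} (hr : ∀ x ∈ A, ∀ y ∈ B, r ≤ c x y) :
    μ A * μ B ≤ ENNReal.ofReal (exp (-r)) := by
  have := h (A.indicator 1) (B.indicator fun _ => ENNReal.ofReal (exp r))
    (measurable_const.indicator hA) (measurable_const.indicator hB) fun x y => by
      by_cases hx : x ∈ A <;> by_cases hy : y ∈ B <;> simp [hx, hy]
      exact ENNReal.ofReal_le_ofReal (exp_le_exp.2 (hr x hx y hy))
  rw [lintegral_indicator_one hA, lintegral_indicator_const hB, ← mul_assoc, mul_right_comm,
    ← ENNReal.le_inv_iff_mul_le] at this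
  rwa [ENNReal.ofReal_exp_neg]

end HasPropertyTau

theorem gaussianPDFReal_mul_gaussianPDFReal_mul_exp (s t : ℝ) :
    gaussianPDFReal 0 1 s * gaussianPDFReal 0 1 t * exp ((s - t) ^ 2 / 4) =
      gaussianPDFReal 0 1 ((s + t) / 2) ^ 2 := by
  simp only [gaussianPDFReal, NNReal.coe_one, mul_one, sub_zero]
  rw [mul_pow, sq (rexp _), ← exp_add, show -((s + t) / 2) ^ 2 / 2 + -((s + t) / 2) ^ 2 / 2 =
    -s ^ 2 / 2 + -t ^ 2 / 2 + (s - t) ^ 2 / 4 by ring, exp_add, exp_add]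
  ring

theorem hasPropertyTau_gaussianReal :
    HasPropertyTau (gaussianReal 0 1) fun s t => (s - t) ^ 2 / 4 := by
  intro F G hF hG hFG
  rw [gaussianReal_of_var_ne_zero 0 one_ne_zero,
    lintegral_withDensity_eq_lintegral_mul _ (measurable_gaussianPDF 0 1) hF,
    lintegral_withDensity_eq_lintegral_mul _ (measurable_gaussianPDF 0 1) hG]
  have := lintegral_mul_lintegral_le_sq ((measurable_gaussianPDF 0 1).mul hF)
    ((measurable_gaussianPDF 0 1).mul hG) (measurable_gaussianPDF 0 1) fun s t => calc
      (gaussianPDF 0 1 * F) s * (gaussianPDF 0 1 * G) t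
          = F s * G t * (gaussianPDF 0 1 s * gaussianPDF 0 1 t) := by
        simp only [Pi.mul_apply]; ring
      _ ≤ ENNReal.ofReal (exp ((s - t) ^ 2 / 4)) * (gaussianPDF 0 1 s * gaussianPDF 0 1 t) := by
        gcongr; exact hFG s t
      _ = gaussianPDF 0 1 ((s + t) / 2) ^ 2 := by
        simp only [gaussianPDF]
        rw [← ENNReal.ofReal_mul (gaussianPDFReal_nonneg _ _ _),
          ← ENNReal.ofReal_mul (exp_pos _).le, ← ENNReal.ofReal_pow (gaussianPDFReal_nonneg _ _ _),
          ← gaussianPDFReal_mul_gaussianPDFReal_mul_exp, mul_comm]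
  rwa [lintegral_gaussianPDF_eq_one 0 one_ne_zero, one_pow] at this

theorem hasPropertyTau_pi_gaussianReal (n : ℕ) :
    HasPropertyTau (Measure.pi fun _ : Fin n => gaussianReal 0 1)
      fun x y => (∑ i, (x i - y i) ^ 2) / 4 := by
  induction n with
  | zero =>
    intro F G hF hG hFG
    rw [Measure.pi_of_empty, lintegral_dirac' _ hF, lintegral_dirac' _ hG]
    simpa using hFG _ _
  | succ n ih =>
    rw [← ((measurePreserving_piFinSuccAbove (fun _ => gaussianReal 0 1) 0).symm _).map_eq]
    refine ((hasPropertyTau_gaussianReal.prod ih).map _).mono fun x y => le_of_eq ?_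
    simp [Fin.sum_univ_succ, MeasurableEquiv.piFinSuccAbove, Fin.tail]
    ring

theorem hasPropertyTau_stdGaussian (n : ℕ) :
    HasPropertyTau (stdGaussian n) fun x y => ‖x - y‖ ^ 2 / 4 :=
  ((hasPropertyTau_pi_gaussianReal n).map _).mono fun x y => le_of_eq <| by
    simp [EuclideanSpace.norm_sq_eq]

/-- If `A` and `B` are Borel sets at Euclidean distance at least `ε > 0` from each other,
then `μ(A)·μ(B) ≤ exp(−ε²/4)` for the standard Gaussian measure `μ` on `ℝⁿ`. -/
theorem gaussian_separation_bound (n : ℕ) (A B : Set (EuclideanSpace ℝ (Fin n)))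
    (hA : MeasurableSet A) (hB : MeasurableSet B) (ε : ℝ) (hε : 0 < ε)
    (hsep : ∀ x ∈ A, ∀ y ∈ B, ε ≤ ‖x - y‖) :
    stdGaussian n A * stdGaussian n B ≤ ENNReal.ofReal (Real.exp (-(ε ^ 2) / 4)) := by
  rw [neg_div]
  exact (hasPropertyTau_stdGaussian n).measure_mul_measure_le hA hB fun x hx y hy => by
    gcongr; exact hsep x hx y hy
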